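/- (Existence of a positive equilibrium.) If R_0 > 1, then the spatially homogeneous system admits a positive equilibrium: there exist real numbers B* > 0, Q* with Q_m < Q* ≤ Q_M, and P* > 0 such that U(B*, Q*, P*) = 0, V(B*, Q*, P*) = 0, and W(B*, Q*, P*) = 0. -/

import Mathlib

set_option linter.unusedVariables false

/-- Light intensity at depth `s` with biomass `B`:  `I(s,B) = I_in · exp(−(K_bg + k·B)·s)`. -/
noncomputable def lightI (I_in K_bg k : ℝ) (s B : ℝ) : ℝ :=
  I_in * Real.exp (-((K_bg + k * B) * s))

/-- Light-limited growth factor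
`h(B) = ln((H + I_in)/(H + I(z_m,B)))/(z_m·(k·B + K_bg))`. -/
noncomputable def hfun (z_m k K_bg H I_in : ℝ) (B : ℝ) : ℝ :=
  Real.log ((H + I_in) / (H + lightI I_in K_bg k z_m B)) / (z_m * (k * B + K_bg))

/-- Quota uptake function `ρ(Q,P) = ρ_m·((Q_M − Q)/(Q_M − Q_m))·(P/(P + M))`. -/
noncomputable def rhofun (ρ_m Q_m Q_M M : ℝ) (Q P : ℝ) : ℝ :=
  ρ_m * ((Q_M - Q) / (Q_M - Q_m)) * (P / (P + M))

/-- Right-hand side of the `B`-equation of the spatially homogeneous system: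
`U(B,Q,P) = r·B·(1 − Q_m/Q)·h(B) − l·B − (D/z_m)·B`. -/
noncomputable def Ufun (r Q_m Q_M z_m k K_bg H I_in l D ρ_m M : ℝ)
    (B Q P : ℝ) : ℝ :=
  r * B * (1 - Q_m / Q) * hfun z_m k K_bg H I_in B - l * B - (D / z_m) * B

/-- Right-hand side of the `Q`-equation of the spatially homogeneous system:
`V(B,Q,P) = ρ(Q,P) − r·Q·(1 − Q_m/Q)·h(B)`. -/
noncomputable def Vfun (r Q_m Q_M z_m k K_bg H I_in l D ρ_m M : ℝ)
    (B Q P : ℝ) : ℝ :=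
  rhofun ρ_m Q_m Q_M M Q P - r * Q * (1 - Q_m / Q) * hfun z_m k K_bg H I_in B

/-- Right-hand side of the `P`-equation of the spatially homogeneous system:
`W(B,Q,P) = (D/z_m)·(P_h − P) − ρ(Q,P)·B + l·B·Q`. -/
noncomputable def Wfun (r Q_m Q_M z_m k K_bg H I_in l D ρ_m M P_h : ℝ)
    (B Q P : ℝ) : ℝ :=
  (D / z_m) * (P_h - P) - rhofun ρ_m Q_m Q_M M Q P * B + l * B * Q

/-- `ρ̃ = (ρ_m/(Q_M − Q_m))·(P_h/(P_h + M))`. -/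
noncomputable def rhoTilde (ρ_m Q_m Q_M M P_h : ℝ) : ℝ :=
  (ρ_m / (Q_M - Q_m)) * (P_h / (P_h + M))

/-- The extinction-state cell quota
`Q̂ = (ρ̃·Q_M + r·h(0)·Q_m)/(ρ̃ + r·h(0))`. -/
noncomputable def Qhat (r Q_m Q_M z_m k K_bg H I_in ρ_m M P_h : ℝ) : ℝ :=
  (rhoTilde ρ_m Q_m Q_M M P_h * Q_M + r * hfun z_m k K_bg H I_in 0 * Q_m) /
    (rhoTilde ρ_m Q_m Q_M M P_h + r * hfun z_m k K_bg H I_in 0)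

/-- The basic ecological reproductive index
`R_0 = r·h(0)·(1 − Q_m/Q̂)/(l + D/z_m)`. -/
noncomputable def R0 (r Q_m Q_M z_m k K_bg H I_in l D ρ_m M P_h : ℝ) : ℝ :=
  r * hfun z_m k K_bg H I_in 0 *
    (1 - Q_m / Qhat r Q_m Q_M z_m k K_bg H I_in ρ_m M P_h) / (l + D / z_m)

private lemma hfun_pos {z_m k K_bg H I_in B : ℝ} (hzm : 0 < z_m) (hk : 0 < k)
    (hKbg : 0 < K_bg) (hH : 0 < H) (hIin : 0 < I_in) (hB : 0 ≤ B) :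
    0 < hfun z_m k K_bg H I_in B := by
  have hden : 0 < z_m * (k * B + K_bg) := by positivity
  have hexp : Real.exp (-((K_bg + k * B) * z_m)) < 1 := by
    rw [Real.exp_lt_one_iff]
    nlinarith [mul_nonneg hk.le hB]
  have hlt : lightI I_in K_bg k z_m B < I_in := by
    unfold lightI; nlinarith [Real.exp_pos (-((K_bg + k * B) * z_m))]
  have hIpos : 0 < lightI I_in K_bg k z_m B := mul_pos hIin (Real.exp_pos _)
  have hlog : 0 < Real.log ((H + I_in) / (H + lightI I_in K_bg k z_m B)) := by
    apply Real.log_pos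
    rw [one_lt_div (by linarith)]
    linarith
  exact div_pos hlog hden

private lemma hfun_le {z_m k K_bg H I_in B : ℝ} (hzm : 0 < z_m) (hk : 0 < k)
    (hKbg : 0 < K_bg) (hH : 0 < H) (hIin : 0 < I_in) (hB : 0 ≤ B) :
    hfun z_m k K_bg H I_in B ≤ Real.log ((H + I_in) / H) / (z_m * (k * B + K_bg)) := by
  have hden : 0 < z_m * (k * B + K_bg) := by positivity
  have hIpos : 0 < lightI I_in K_bg k z_m B := mul_pos hIin (Real.exp_pos _)
  have h1 : (H + I_in) / (H + lightI I_in K_bg k z_m B) ≤ (H + I_in) / H := by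
    gcongr
    linarith
  have h2 : Real.log ((H + I_in) / (H + lightI I_in K_bg k z_m B)) ≤ Real.log ((H + I_in) / H) :=
    Real.log_le_log (by positivity) h1
  unfold hfun
  gcongr

private lemma hfun_contAt {z_m k K_bg H I_in : ℝ} (hzm : 0 < z_m) (hk : 0 < k)
    (hKbg : 0 < K_bg) (hH : 0 < H) (hIin : 0 < I_in) {B : ℝ} (hB : 0 ≤ B) :
    ContinuousAt (hfun z_m k K_bg H I_in) B := by
  have hden_ne : z_m * (k * B + K_bg) ≠ 0 := by positivity
  unfold hfun lightI
  apply ContinuousAt.div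
  · apply ContinuousAt.log
    · apply ContinuousAt.div continuousAt_const
      · fun_prop
      · have : 0 < I_in * Real.exp (-((K_bg + k * B) * z_m)) := mul_pos hIin (Real.exp_pos _)
        positivity
    · have : 0 < I_in * Real.exp (-((K_bg + k * B) * z_m)) := mul_pos hIin (Real.exp_pos _)
      positivity
  · fun_prop
  · exact hden_ne

set_option maxHeartbeats 1000000 in
/-- Existence of a positive equilibrium: if `R_0 > 1` then the
spatially homogeneous system admits an equilibrium `(B*, Q*, P*)` with
`B* > 0`, `Q_m < Q* ≤ Q_M` and `P* > 0`. -/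
theorem positive_equilibrium_exists
    (r Q_m Q_M z_m k K_bg H I_in l D ρ_m M P_h : ℝ)
    (hr : 0 < r) (hQm : 0 < Q_m) (hQM : 0 < Q_M) (hzm : 0 < z_m) (hk : 0 < k)
    (hKbg : 0 < K_bg) (hH : 0 < H) (hIin : 0 < I_in) (hl : 0 < l) (hD : 0 < D)
    (hρm : 0 < ρ_m) (hM : 0 < M) (hQmM : Q_m < Q_M) (hPh : 0 ≤ P_h)
    (hR0 : 1 < R0 r Q_m Q_M z_m k K_bg H I_in l D ρ_m M P_h) :
    ∃ Bs Qs Ps : ℝ, 0 < Bs ∧ Q_m < Qs ∧ Qs ≤ Q_M ∧ 0 < Ps ∧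
      Ufun r Q_m Q_M z_m k K_bg H I_in l D ρ_m M Bs Qs Ps = 0 ∧
      Vfun r Q_m Q_M z_m k K_bg H I_in l D ρ_m M Bs Qs Ps = 0 ∧
      Wfun r Q_m Q_M z_m k K_bg H I_in l D ρ_m M P_h Bs Qs Ps = 0 := by
  have hz_ne : z_m ≠ 0 := hzm.ne'
  have hQMm : 0 < Q_M - Q_m := sub_pos.mpr hQmM
  have hd_pos0 : 0 < l + D / z_m := by positivity
  have hh0 : 0 < hfun z_m k K_bg H I_in 0 := hfun_pos hzm hk hKbg hH hIin le_rfl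
  have hApos0 : 0 < r * hfun z_m k K_bg H I_in 0 := mul_pos hr hh0
  -- P_h must be positive
  have hPh0 : 0 < P_h := by
    rcases hPh.lt_or_eq with h | h
    · exact h
    · exfalso
      have h1 : rhoTilde ρ_m Q_m Q_M M P_h = 0 := by rw [← h]; simp [rhoTilde]
      have h2 : Qhat r Q_m Q_M z_m k K_bg H I_in ρ_m M P_h = Q_m := by
        rw [Qhat, h1]
        field_simp
        ring
      rw [R0, h2, div_self hQm.ne', sub_self, mul_zero, zero_div] at hR0
      linarith
  rw [R0] at hR0
  set d : ℝ := l + D / z_m with hd_def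
  set A : ℝ := r * hfun z_m k K_bg H I_in 0 with hA_def
  set Qh : ℝ := Qhat r Q_m Q_M z_m k K_bg H I_in ρ_m M P_h with hQh_def
  set ρt : ℝ := rhoTilde ρ_m Q_m Q_M M P_h with hρt_def
  clear_value d A Qh ρt
  have hd_pos : 0 < d := hd_pos0
  have hApos : 0 < A := hApos0
  have hρt : 0 < ρt := by
    rw [hρt_def, rhoTilde]
    exact mul_pos (div_pos hρm hQMm) (div_pos hPh0 (by linarith))
  have hsum : 0 < ρt + A := by linarith
  have hQh_eq2 : Qh = (ρt * Q_M + A * Q_m) / (ρt + A) := by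
    rw [hQh_def, Qhat, ← hρt_def, ← hA_def]
  have hQh_eq : Qh * (ρt + A) = ρt * Q_M + A * Q_m := by
    rw [hQh_eq2, div_mul_cancel₀ _ hsum.ne']
  have hQh_lt : Qh < Q_M := by
    rw [hQh_eq2, div_lt_iff₀ hsum]
    linarith [mul_pos hApos hQMm]
  have hQh_gt : Q_m < Qh := by
    rw [hQh_eq2, lt_div_iff₀ hsum]
    linarith [mul_pos hρt hQMm]
  have hQh_pos : 0 < Qh := hQm.trans hQh_gt
  have hR0' : d < A * (1 - Q_m / Qh) := (one_lt_div hd_pos).mp hR0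
  have had : d < A := by
    linarith [mul_pos hApos (div_pos hQm hQh_pos)]
  have hkey0 : Q_M * d < (Q_M - Q_m) * A := by
    have e1 : Q_m / Q_M < Q_m / Qh := div_lt_div_of_pos_left hQm hQh_pos hQh_lt
    have e2 : d < A * (1 - Q_m / Q_M) := by
      linarith [mul_pos hApos (sub_pos.mpr e1), hR0']
    have e3 : A * (Q_m / Q_M) * Q_M = A * Q_m := by field_simp
    linarith [mul_pos hQM (sub_pos.mpr e2), e3]
  -- the functions
  set g : ℝ → ℝ := fun B => r * hfun z_m k K_bg H I_in B with hg_def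
  clear_value g
  have hg0 : g 0 = A := by rw [hg_def, hA_def]
  have hgc : ∀ B : ℝ, 0 ≤ B → ContinuousAt g B := by
    intro B hB
    rw [hg_def]
    exact continuousAt_const.mul (hfun_contAt hzm hk hKbg hH hIin hB)
  have hgpos : ∀ B : ℝ, 0 ≤ B → 0 < g B := by
    intro B hB
    rw [hg_def]
    exact mul_pos hr (hfun_pos hzm hk hKbg hH hIin hB)
  set φ : ℝ → ℝ := fun B => Q_M * (g B - d) - Q_m * g B with hφ_def
  set ψ : ℝ → ℝ := fun B => P_h * (g B - d) - B * (Q_m * g B) with hψ_def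
  clear_value φ ψ
  have hφe : ∀ B : ℝ, φ B = Q_M * (g B - d) - Q_m * g B := by
    intro B; rw [hφ_def]
  have hψe : ∀ B : ℝ, ψ B = P_h * (g B - d) - B * (Q_m * g B) := by
    intro B; rw [hψ_def]
  have hφc : ∀ B : ℝ, 0 ≤ B → ContinuousAt φ B := by
    intro B hB
    rw [hφ_def]
    exact (continuousAt_const.mul ((hgc B hB).sub continuousAt_const)).sub
      (continuousAt_const.mul (hgc B hB))
  have hψc : ∀ B : ℝ, 0 ≤ B → ContinuousAt ψ B := by
    intro B hB
    rw [hψ_def]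
    exact (continuousAt_const.mul ((hgc B hB).sub continuousAt_const)).sub
      (continuousAt_id.mul (continuousAt_const.mul (hgc B hB)))
  have hφ0 : 0 < φ 0 := by
    rw [hφe 0, hg0]
    linarith [hkey0]
  have hψ0 : 0 < ψ 0 := by
    rw [hψe 0, hg0]
    have := mul_pos hPh0 (sub_pos.mpr had)
    linarith [this]
  -- the stopping set
  set T : Set ℝ := {B : ℝ | 0 ≤ B ∧ min (φ B) (ψ B) ≤ 0} with hT_def
  clear_value T
  have hTmem : ∀ B : ℝ, B ∈ T ↔ (0 ≤ B ∧ min (φ B) (ψ B) ≤ 0) := by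
    intro B; rw [hT_def]; exact Iff.rfl
  have hTclosed : IsClosed T := by
    have hco : ContinuousOn (fun B => min (φ B) (ψ B)) (Set.Ici 0) :=
      continuousOn_of_forall_continuousAt (fun x hx => (hφc x hx).min (hψc x hx))
    have h1 : IsClosed (Set.Ici (0:ℝ) ∩ (fun B => min (φ B) (ψ B)) ⁻¹' Set.Iic (0:ℝ)) :=
      hco.preimage_isClosed_of_isClosed isClosed_Ici isClosed_Iic
    rw [hT_def]
    convert h1 using 1
    exact rfl
  have hbdd : BddBelow T := ⟨0, fun x hx => ((hTmem x).mp hx).1⟩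
  -- T is nonempty
  have hTne : T.Nonempty := by
    set C : ℝ := Real.log ((H + I_in) / H) with hC_def
    set B0 : ℝ := r * C / (d * z_m * k) with hB0_def
    clear_value C B0
    have hCpos : 0 < C := by
      rw [hC_def]
      exact Real.log_pos ((one_lt_div hH).mpr (by linarith))
    have hB0 : 0 ≤ B0 := by
      rw [hB0_def]; positivity
    have hden0 : z_m * (k * B0 + K_bg) = r * C / d + z_m * K_bg := by
      rw [hB0_def]; field_simp
    have h1 : hfun z_m k K_bg H I_in B0 ≤ C / (z_m * (k * B0 + K_bg)) := by
      rw [hC_def]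
      exact hfun_le hzm hk hKbg hH hIin hB0
    have hgB0 : g B0 < d := by
      have h2 : g B0 ≤ r * C / (r * C / d + z_m * K_bg) := by
        rw [hg_def, ← hden0, mul_div_assoc]
        exact mul_le_mul_of_nonneg_left h1 hr.le
      have h3 : r * C / (r * C / d + z_m * K_bg) < d := by
        rw [div_lt_iff₀ (by positivity)]
        have e : d * (r * C / d) = r * C := by field_simp
        linarith [mul_pos hd_pos (mul_pos hzm hKbg), e]
      linarith
    have hφB0 : φ B0 < 0 := by
      have hgp := hgpos B0 hB0
      rw [hφe B0]
      linarith [mul_pos hQm hgp, mul_pos hQM (sub_pos.mpr hgB0)]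
    exact ⟨B0, (hTmem B0).mpr ⟨hB0, le_trans (min_le_left _ _) hφB0.le⟩⟩
  set B1 : ℝ := sInf T with hB1_def
  clear_value B1
  have hB1T : 0 ≤ B1 ∧ min (φ B1) (ψ B1) ≤ 0 := by
    rw [← hTmem B1, hB1_def]
    exact hTclosed.csInf_mem hTne hbdd
  have hB1nn : 0 ≤ B1 := hB1T.1
  have hbefore : ∀ B : ℝ, 0 ≤ B → B < B1 → 0 < φ B ∧ 0 < ψ B := by
    intro B hB hBlt
    by_contra hcon
    have hor : φ B ≤ 0 ∨ ψ B ≤ 0 := by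
      by_contra h'
      push_neg at h'
      exact hcon ⟨h'.1, h'.2⟩
    have hmem : B ∈ T := by
      refine (hTmem B).mpr ⟨hB, ?_⟩
      rcases hor with h | h
      · exact le_trans (min_le_left _ _) h
      · exact le_trans (min_le_right _ _) h
    have : B1 ≤ B := by rw [hB1_def]; exact csInf_le hbdd hmem
    linarith
  have hB1pos : 0 < B1 := by
    rcases hB1nn.lt_or_eq with h | h
    · exact h
    · exfalso
      have h2 := hB1T.2
      rw [← h] at h2
      have := lt_min hφ0 hψ0
      linarith
  have hφB1 : 0 ≤ φ B1 := by
    have ht : Filter.Tendsto φ (nhdsWithin B1 (Set.Iio B1)) (nhds (φ B1)) :=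
      ((hφc B1 hB1nn).tendsto).mono_left nhdsWithin_le_nhds
    refine ge_of_tendsto ht ?_
    filter_upwards [Ioo_mem_nhdsLT_of_mem (Set.mem_Ioc.mpr ⟨hB1pos, le_refl B1⟩)] with x hx
    exact (hbefore x hx.1.le hx.2).1.le
  have hψB1 : 0 ≤ ψ B1 := by
    have ht : Filter.Tendsto ψ (nhdsWithin B1 (Set.Iio B1)) (nhds (ψ B1)) :=
      ((hψc B1 hB1nn).tendsto).mono_left nhdsWithin_le_nhds
    refine ge_of_tendsto ht ?_
    filter_upwards [Ioo_mem_nhdsLT_of_mem (Set.mem_Ioc.mpr ⟨hB1pos, le_refl B1⟩)] with x hx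
    exact (hbefore x hx.1.le hx.2).2.le
  have hφψB1 : φ B1 = 0 ∨ ψ B1 = 0 := by
    rcases min_le_iff.mp hB1T.2 with h | h
    · left; linarith
    · right; linarith
  have hmem_facts : ∀ B ∈ Set.Icc (0:ℝ) B1, 0 ≤ φ B ∧ 0 ≤ ψ B := by
    intro B hB
    rcases hB.2.lt_or_eq with h | h
    · have := hbefore B hB.1 h
      exact ⟨this.1.le, this.2.le⟩
    · rw [h]; exact ⟨hφB1, hψB1⟩
  have hgd : ∀ B ∈ Set.Icc (0:ℝ) B1, d < g B := by
    intro B hB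
    have h1 := (hmem_facts B hB).1
    rw [hφe B] at h1
    by_contra hc
    push_neg at hc
    have h2 : (Q_M - Q_m) * (g B - d) ≤ 0 :=
      mul_nonpos_of_nonneg_of_nonpos hQMm.le (by linarith)
    linarith [mul_pos hQm hd_pos, h2]
  -- the candidate equilibrium branch
  set Qf : ℝ → ℝ := fun B => Q_m * g B / (g B - d) with hQf_def
  clear_value Qf
  have hQfe : ∀ B : ℝ, Qf B = Q_m * g B / (g B - d) := by intro B; rw [hQf_def]
  set Pf : ℝ → ℝ := fun B => P_h - B * Qf B with hPf_def
  clear_value Pf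
  have hPfe : ∀ B : ℝ, Pf B = P_h - B * Qf B := by intro B; rw [hPf_def]
  set Ff : ℝ → ℝ := fun B =>
    ρ_m * ((Q_M - Qf B) / (Q_M - Q_m)) * (Pf B / (Pf B + M)) - Qf B * d with hFf_def
  clear_value Ff
  have hFfe : ∀ B : ℝ, Ff B =
      ρ_m * ((Q_M - Qf B) / (Q_M - Q_m)) * (Pf B / (Pf B + M)) - Qf B * d := by
    intro B; rw [hFf_def]
  have hQfgt : ∀ B ∈ Set.Icc (0:ℝ) B1, Q_m < Qf B := by
    intro B hB
    have hx := hgd B hB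
    rw [hQfe B, lt_div_iff₀ (by linarith : (0:ℝ) < g B - d)]
    linarith [mul_pos hQm hd_pos]
  have hQfle : ∀ B ∈ Set.Icc (0:ℝ) B1, Qf B ≤ Q_M := by
    intro B hB
    have hx := hgd B hB
    have h1 := (hmem_facts B hB).1
    rw [hφe B] at h1
    rw [hQfe B, div_le_iff₀ (by linarith : (0:ℝ) < g B - d)]
    linarith
  have hQfpos : ∀ B ∈ Set.Icc (0:ℝ) B1, 0 < Qf B := fun B hB => hQm.trans (hQfgt B hB)
  have hPfge : ∀ B ∈ Set.Icc (0:ℝ) B1, 0 ≤ Pf B := by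
    intro B hB
    have hx := hgd B hB
    have h1 := (hmem_facts B hB).2
    rw [hψe B] at h1
    rw [hPfe B, sub_nonneg, hQfe B, mul_div_assoc',
      div_le_iff₀ (by linarith : (0:ℝ) < g B - d)]
    linarith
  have hgco : ContinuousOn g (Set.Icc 0 B1) :=
    continuousOn_of_forall_continuousAt (fun x hx => hgc x hx.1)
  have hQfco : ContinuousOn Qf (Set.Icc 0 B1) := by
    rw [hQf_def]
    exact (continuousOn_const.mul hgco).div (hgco.sub continuousOn_const)
      (fun x hx => by have := hgd x hx; exact (by linarith : (0:ℝ) < g x - d).ne')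
  have hPfco : ContinuousOn Pf (Set.Icc 0 B1) := by
    rw [hPf_def]
    exact continuousOn_const.sub (continuousOn_id.mul hQfco)
  have hFfco : ContinuousOn Ff (Set.Icc 0 B1) := by
    rw [hFf_def]
    apply ContinuousOn.sub
    · apply ContinuousOn.mul
      · exact continuousOn_const.mul ((continuousOn_const.sub hQfco).div_const _)
      · exact hPfco.div (hPfco.add continuousOn_const)
          (fun x hx => by have := hPfge x hx; exact (by linarith : (0:ℝ) < Pf x + M).ne')
    · exact hQfco.mul continuousOn_const
  have h0mem : (0:ℝ) ∈ Set.Icc (0:ℝ) B1 := ⟨le_refl 0, hB1nn⟩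
  have hB1mem : B1 ∈ Set.Icc (0:ℝ) B1 := ⟨hB1nn, le_refl B1⟩
  -- F(0) > 0
  have hAd : 0 < A - d := sub_pos.mpr had
  have hQf0 : Qf 0 = Q_m * A / (A - d) := by rw [hQfe 0, hg0]
  have hF0 : 0 < Ff 0 := by
    have hPf0 : Pf 0 = P_h := by rw [hPfe 0]; ring
    have e2 : Qf 0 * (A - d) = Q_m * A := by
      rw [hQf0]; exact div_mul_cancel₀ _ hAd.ne'
    have h5 : d * Qh < A * (Qh - Q_m) := by
      have e : (1 - Q_m / Qh) * Qh = Qh - Q_m := by field_simp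
      have e2 : A * ((1 - Q_m / Qh) * Qh) = A * (Qh - Q_m) := by rw [e]
      linarith [mul_pos hQh_pos (sub_pos.mpr hR0'), e2]
    have hQ0lt : Qf 0 < Qh := by
      rw [hQf0, div_lt_iff₀ hAd]
      linarith [h5]
    have eρ : ρ_m * ((Q_M - Qf 0) / (Q_M - Q_m)) * (Pf 0 / (Pf 0 + M))
        = ρt * (Q_M - Qf 0) := by
      rw [hPf0, hρt_def, rhoTilde]; ring
    rw [hFfe 0, eρ]
    linarith [hQh_eq, e2, mul_pos hsum (sub_pos.mpr hQ0lt)]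
  -- F(B1) < 0
  have hFB1 : Ff B1 < 0 := by
    have hxB1 := hgd B1 hB1mem
    have hQB1pos := hQfpos B1 hB1mem
    have hne1 : g B1 - d ≠ 0 := (sub_pos.mpr hxB1).ne'
    have hzero : ρ_m * ((Q_M - Qf B1) / (Q_M - Q_m)) * (Pf B1 / (Pf B1 + M)) = 0 := by
      rcases hφψB1 with h | h
      · have hq : Qf B1 = Q_M := by
          rw [hφe B1] at h
          rw [hQfe B1, div_eq_iff hne1]
          linarith
        rw [hq]; simp
      · have hp : Pf B1 = 0 := by
          rw [hψe B1] at h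
          rw [hPfe B1, hQfe B1, mul_div_assoc', sub_eq_zero, eq_div_iff hne1]
          linarith
        rw [hp]; simp
    rw [hFfe B1, hzero]
    linarith [mul_pos hQB1pos hd_pos]
  -- intermediate value theorem
  obtain ⟨Bs, hBs_mem, hFBs⟩ := intermediate_value_Icc' hB1nn hFfco ⟨hFB1.le, hF0.le⟩
  have hBs_pos : 0 < Bs := by
    rcases hBs_mem.1.lt_or_eq with h | h
    · exact h
    · exfalso; rw [← h] at hFBs; linarith
  have hx := hgd Bs hBs_mem
  have hQs_pos := hQfpos Bs hBs_mem
  have hρ_eq : rhofun ρ_m Q_m Q_M M (Qf Bs) (Pf Bs) = Qf Bs * d := by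
    have h1 : Ff Bs = 0 := hFBs
    rw [hFfe Bs] at h1
    rw [rhofun]
    linarith
  have hPs_pos : 0 < Pf Bs := by
    rcases (hPfge Bs hBs_mem).lt_or_eq with h | h
    · exact h
    · exfalso
      have h2 : rhofun ρ_m Q_m Q_M M (Qf Bs) (Pf Bs) = 0 := by
        rw [rhofun, ← h]; simp
      rw [hρ_eq] at h2
      linarith [mul_pos hQs_pos hd_pos]
  have hgBs : g Bs = r * hfun z_m k K_bg H I_in Bs := by rw [hg_def]
  have hx' : d < r * hfun z_m k K_bg H I_in Bs := by rw [← hgBs]; exact hx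
  have hQsne : Qf Bs ≠ 0 := hQs_pos.ne'
  have hrfpos : (0:ℝ) < r * hfun z_m k K_bg H I_in Bs := lt_trans hd_pos hx'
  have hrfne : r * hfun z_m k K_bg H I_in Bs ≠ 0 := hrfpos.ne'
  have hQs_eq : Qf Bs * (r * hfun z_m k K_bg H I_in Bs - d)
      = Q_m * (r * hfun z_m k K_bg H I_in Bs) := by
    rw [hQfe Bs, hgBs]
    exact div_mul_cancel₀ _ (sub_pos.mpr hx').ne'
  have hkeyU : r * (1 - Q_m / Qf Bs) * hfun z_m k K_bg H I_in Bs = d := by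
    have h1 : Q_m / Qf Bs = (r * hfun z_m k K_bg H I_in Bs - d)
        / (r * hfun z_m k K_bg H I_in Bs) := by
      rw [div_eq_div_iff hQsne hrfne]
      linarith [hQs_eq]
    rw [h1, one_sub_div hrfne, sub_sub_cancel]
    rw [show r * (d / (r * hfun z_m k K_bg H I_in Bs)) * hfun z_m k K_bg H I_in Bs
      = d * (r * hfun z_m k K_bg H I_in Bs) / (r * hfun z_m k K_bg H I_in Bs) by ring]
    exact mul_div_cancel_right₀ d hrfne
  refine ⟨Bs, Qf Bs, Pf Bs, hBs_pos, hQfgt Bs hBs_mem, hQfle Bs hBs_mem, hPs_pos, ?_, ?_, ?_⟩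
  · have e : Ufun r Q_m Q_M z_m k K_bg H I_in l D ρ_m M Bs (Qf Bs) (Pf Bs)
        = Bs * (r * (1 - Q_m / Qf Bs) * hfun z_m k K_bg H I_in Bs - d) := by
      rw [Ufun, hd_def]; ring
    rw [e, hkeyU, sub_self, mul_zero]
  · have e : r * Qf Bs * (1 - Q_m / Qf Bs) * hfun z_m k K_bg H I_in Bs
        = Qf Bs * (r * (1 - Q_m / Qf Bs) * hfun z_m k K_bg H I_in Bs) := by ring
    rw [Vfun, hρ_eq, e, hkeyU]
    ring
  · have hPs_eq : P_h - Pf Bs = Bs * Qf Bs := by rw [hPfe Bs]; ring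
    rw [Wfun, hρ_eq, hPs_eq, hd_def]
    ring
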